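/- arXiv:2009.09303 — 2 statements merged into one kernel-verified Lean document; each statement's English description precedes it below -/
import Mathlib

section
/- Every disjointness preserving bounded linear operator between complex Banach lattices is order bounded: given z ∈ X there exists w ∈ Y₊ such that for all u ∈ X, |u| ≤ |z| implies |T(u)| ≤ w. -/
noncomputable section

/-- Scalar multiplication by a complex number on the complexification `E × E`
of a real Banach lattice `E`. -/
def cSmul {E : Type*} [AddCommGroup E] [Module ℝ E] (c : ℂ) (z : E × E) : E × E :=
  (c.re • z.1 - c.im • z.2, c.im • z.1 + c.re • z.2)

/-- `m` is the complex modulus of `z = x + iy`. -/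
def IsCAbs {E : Type*} [Lattice E] [AddCommGroup E] [Module ℝ E] (z : E × E) (m : E) : Prop :=
  IsLUB {v : E | ∃ θ : ℝ, v = Real.cos θ • z.1 + Real.sin θ • z.2} m

/-!
Restricting `T` to the real and to the imaginary axis reduces the theorem to additive maps
`S : E → F × F` that send disjoint positive elements to elements of disjoint moduli; for these it
suffices to show `|S p| ≤ |S e|` whenever `0 ≤ p ≤ e`, because `|S a| = |S a⁺| + |S a⁻| = |S |a||`.

Cut `n p ≤ n e` into the layers `q k = (n p - k e)⁺ ⊓ e`, `k < n`: they sum to `n p`, and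
`e - q j` is disjoint from `q k` for `j < k`. An induction on `n` then gives
`n |S p| ≤ n |S e| + Z` with `Z = ∑ |S (q k - q (k + 1))|`. The differences with indices of equal
parity are pairwise disjoint, so `Z = |S A| + |S B|` with `0 ≤ A, B ≤ e`, and `‖Z‖` is bounded
independently of `n`. Hence `‖(|S p| - |S e|)⁺‖ = O(1/n)`, i.e. `|S p| ≤ |S e|`.
-/

section LatticeOrderedGroup

variable {α : Type*} [Lattice α] [AddCommGroup α] [IsOrderedAddMonoid α]

theorem inf_add_le_inf_add_inf {u s t : α} (hu : 0 ≤ u) (hs : 0 ≤ s) (ht : 0 ≤ t) :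
    u ⊓ (s + t) ≤ u ⊓ s + u ⊓ t := by
  have h₁ : u ⊓ (s + t) ≤ u ⊓ s + u := le_add_of_nonneg_of_le (le_inf hu hs) inf_le_left
  have h₂ : u ⊓ (s + t) ≤ u ⊓ s + t := by
    rw [inf_add]
    exact inf_le_inf_right _ (le_add_of_nonneg_right ht)
  simpa only [← add_inf] using le_inf h₁ h₂

omit [IsOrderedAddMonoid α] in
theorem inf_eq_zero_of_le_of_le {u v u' v' : α} (h : u ⊓ v = 0) (hu' : 0 ≤ u') (hv' : 0 ≤ v')
    (hu : u' ≤ u) (hv : v' ≤ v) : u' ⊓ v' = 0 :=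
  le_antisymm (h ▸ inf_le_inf hu hv) (le_inf hu' hv')

theorem inf_sum_eq_zero {ι : Type*} {u : α} {s : Finset ι} {g : ι → α} (hu : 0 ≤ u)
    (hg : ∀ i ∈ s, 0 ≤ g i) (h : ∀ i ∈ s, u ⊓ g i = 0) : u ⊓ ∑ i ∈ s, g i = 0 := by
  induction s using Finset.cons_induction with
  | empty => simpa using hu
  | cons a s ha ih =>
    simp only [Finset.mem_cons, forall_eq_or_imp] at hg h
    rw [Finset.sum_cons]
    refine le_antisymm ?_ (le_inf hu (add_nonneg hg.1 (Finset.sum_nonneg hg.2)))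
    calc u ⊓ (g a + ∑ i ∈ s, g i) ≤ u ⊓ g a + u ⊓ ∑ i ∈ s, g i :=
          inf_add_le_inf_add_inf hu hg.1 (Finset.sum_nonneg hg.2)
      _ = 0 := by rw [h.1, ih hg.2 h.2, add_zero]

theorem nonneg_of_nsmul_nonneg {n : ℕ} {y : α} (hn : n ≠ 0) (h : 0 ≤ n • y) : 0 ≤ y := by
  have hle : n • y⁻ ≤ n • y⁺ := by rwa [← sub_nonneg, ← nsmul_sub, posPart_sub_negPart]
  have hdisj : y⁻ ⊓ n • y⁺ = 0 := by
    simpa using inf_sum_eq_zero (s := Finset.range n) (negPart_nonneg y)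
      (fun _ _ => posPart_nonneg y) (fun _ _ => by rw [inf_comm, posPart_inf_negPart_eq_zero])
  have hneg : y⁻ = 0 :=
    le_antisymm (hdisj ▸ le_inf le_rfl ((le_self_nsmul (negPart_nonneg y) hn).trans hle))
      (negPart_nonneg y)
  rwa [negPart_eq_zero] at hneg

theorem add_eq_sup_of_inf_eq_zero {a b : α} (h : a ⊓ b = 0) : a + b = a ⊔ b := by
  rw [← inf_add_sup a b, h, zero_add]

theorem le_sup_of_le_add_of_le_add {x u v s t : α} (hs : x ≤ u + s) (ht : x ≤ v + t)
    (hst : s ⊓ t = 0) : x ≤ u ⊔ v :=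
  calc x ≤ (u ⊔ v + s) ⊓ (u ⊔ v + t) :=
        le_inf (hs.trans (add_le_add_left le_sup_left _))
          (ht.trans (add_le_add_left le_sup_right _))
    _ = u ⊔ v := by rw [← add_inf, hst, add_zero]

theorem posPart_posPart_sub {a c : α} (hc : 0 ≤ c) : (a⁺ - c)⁺ = (a - c)⁺ := by
  rw [posPart_def, posPart_def, posPart_def, sup_sub, zero_sub, sup_assoc,
    sup_eq_right.2 (neg_nonpos.2 hc)]

theorem posPart_sub_add_inf (x e : α) : (x - e)⁺ + x ⊓ e = x := by
  rw [add_comm, posPart_def, ← sub_self e, ← sup_sub, add_sub, inf_add_sup, add_sub_cancel_right]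

end LatticeOrderedGroup

section Layer

variable {α : Type*} [Lattice α] [AddCommGroup α] {x e : α}

def layer (x e : α) (k : ℕ) : α := (x - k • e)⁺ ⊓ e

theorem layer_nonneg (he : 0 ≤ e) (k : ℕ) : 0 ≤ layer x e k := le_inf (posPart_nonneg _) he

theorem layer_le (k : ℕ) : layer x e k ≤ e := inf_le_right

variable [IsOrderedAddMonoid α]

theorem layer_succ_le (he : 0 ≤ e) (k : ℕ) : layer x e (k + 1) ≤ layer x e k :=
  inf_le_inf_right e <| posPart_mono <| sub_le_sub_left (nsmul_le_nsmul_left he k.le_succ) x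

theorem layer_eq_zero {n : ℕ} (he : 0 ≤ e) (hx : x ≤ n • e) : layer x e n = 0 := by
  rw [layer, posPart_eq_zero.2 (sub_nonpos.2 hx), inf_eq_left.2 he]

theorem layer_succ (he : 0 ≤ e) (k : ℕ) : layer x e (k + 1) = layer (x - e)⁺ e k := by
  rw [layer, layer, posPart_posPart_sub (nsmul_nonneg he k), succ_nsmul', sub_add_eq_sub_sub]

theorem sum_range_layer {n : ℕ} (he : 0 ≤ e) (hx : 0 ≤ x) (hxn : x ≤ n • e) :
    ∑ k ∈ Finset.range n, layer x e k = x := by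
  induction n generalizing x with
  | zero => simpa using (le_antisymm (zero_nsmul e ▸ hxn) hx).symm
  | succ n ih =>
    have hx' : (x - e)⁺ ≤ n • e := by
      rw [posPart_def]
      exact sup_le (sub_le_iff_le_add.2 (succ_nsmul e n ▸ hxn)) (nsmul_nonneg he n)
    rw [Finset.sum_range_succ', Finset.sum_congr rfl fun k _ => layer_succ he k,
      ih (posPart_nonneg _) hx', layer, zero_nsmul, sub_zero, posPart_eq_self.2 hx,
      posPart_sub_add_inf]

theorem sub_layer_inf_layer {j k : ℕ} (he : 0 ≤ e) (hjk : j < k) :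
    (e - layer x e j) ⊓ layer x e k = 0 := by
  set s := x - j • e
  have hsub : e - layer x e j = (s⁺ - e)⁻ := by
    rw [layer, sub_inf, sub_self, negPart_def, neg_sub, posPart_def]
  have hle : layer x e k ≤ (s⁺ - e)⁺ := by
    refine inf_le_left.trans ?_
    rw [posPart_posPart_sub he]
    exact posPart_mono (by
      rw [sub_sub, ← succ_nsmul]; exact sub_le_sub_left (nsmul_le_nsmul_left he hjk) x)
  rw [hsub]
  exact inf_eq_zero_of_le_of_le (inf_comm (s⁺ - e)⁺ _ ▸ posPart_inf_negPart_eq_zero _)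
    (negPart_nonneg _) (layer_nonneg he k) le_rfl hle

theorem layer_sub_layer_succ_inf_eq_zero {i j : ℕ} (he : 0 ≤ e) (hij : i + 2 ≤ j) :
    (layer x e i - layer x e (i + 1)) ⊓ (layer x e j - layer x e (j + 1)) = 0 :=
  inf_eq_zero_of_le_of_le (sub_layer_inf_layer he (by omega : i + 1 < j))
    (sub_nonneg.2 (layer_succ_le he i)) (sub_nonneg.2 (layer_succ_le he j))
    (sub_le_sub_right (layer_le i) _) (sub_le_self _ (layer_nonneg he _))

theorem sum_Ico_layer_sub_layer {k n : ℕ} (he : 0 ≤ e) (hk : k ≤ n) (hxn : x ≤ n • e) :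
    ∑ j ∈ Finset.Ico k n, (layer x e j - layer x e (j + 1)) = layer x e k := by
  rw [Finset.sum_Ico_eq_sub _ hk, Finset.sum_range_sub', Finset.sum_range_sub',
    layer_eq_zero he hxn, sub_zero, sub_sub_cancel]

end Layer

section NormedLattice

variable {α : Type*} [NormedAddCommGroup α] [Lattice α] [HasSolidNorm α] [IsOrderedAddMonoid α]

instance HasSolidNorm.isOrderedModule [NormedSpace ℝ α] : IsOrderedModule ℝ α := by
  refine .of_smul_nonneg fun c hc x hx => ?_
  have hrat : ∀ q : ℚ, 0 ≤ q → 0 ≤ (q : ℝ) • x := fun q hq => by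
    have hden : (q.den : ℝ) * q = q.num.toNat := by
      have h := Rat.den_mul_eq_num q
      rw [← Int.toNat_of_nonneg (Rat.num_nonneg.2 hq)] at h
      exact_mod_cast h
    refine nonneg_of_nsmul_nonneg q.den_pos.ne' ?_
    rw [← Nat.cast_smul_eq_nsmul ℝ, smul_smul, hden, Nat.cast_smul_eq_nsmul]
    exact nsmul_nonneg hx _
  have hclosed : IsClosed {t : ℝ | 0 ≤ |t| • x} := isClosed_le continuous_const (by fun_prop)
  simpa [abs_of_nonneg hc] using
    (Rat.denseRange_cast (𝕜 := ℝ)).induction_on (p := fun t => 0 ≤ |t| • x) c hclosed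
      fun q => by simpa only [Rat.cast_abs] using hrat |q| (abs_nonneg q)

theorem le_abs_mul_norm_of_nonneg_of_le {f : α → ℝ} {C : ℝ} (hf : ∀ a, f a ≤ C * ‖a‖) {a e : α}
    (ha : 0 ≤ a) (hae : a ≤ e) : f a ≤ |C| * ‖e‖ :=
  (hf a).trans <| mul_le_mul (le_abs_self C)
    (norm_le_norm_of_abs_le_abs (by rwa [abs_of_nonneg ha, abs_of_nonneg (ha.trans hae)]))
    (norm_nonneg _) (abs_nonneg C)

theorem le_of_forall_nsmul_le_nsmul_add [NormedSpace ℝ α] {X Y : α} {K : ℝ}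
    (h : ∀ n : ℕ, ∃ Z, 0 ≤ Z ∧ n • X ≤ n • Y + Z ∧ ‖Z‖ ≤ K) : X ≤ Y := by
  have hK : ∀ n : ℕ, 0 < n → (n : ℝ) * ‖(X - Y)⁺‖ ≤ K := fun n hn => by
    obtain ⟨Z, hZ, hle, hZK⟩ := h n
    have hnd : (n : ℝ) • (X - Y)⁺ ≤ Z := by
      rw [posPart_def, ← OrderIso.smulRight_apply (Nat.cast_pos.2 hn), OrderIso.map_sup]
      simp only [OrderIso.smulRight_apply, smul_zero, smul_sub, Nat.cast_smul_eq_nsmul]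
      exact sup_le (sub_le_iff_le_add'.2 hle) hZ
    calc (n : ℝ) * ‖(X - Y)⁺‖ = ‖(n : ℝ) • (X - Y)⁺‖ := by rw [norm_smul, Real.norm_natCast]
      _ ≤ ‖Z‖ := norm_le_norm_of_abs_le_abs (by
          rwa [abs_of_nonneg (smul_nonneg n.cast_nonneg (posPart_nonneg _)), abs_of_nonneg hZ])
      _ ≤ K := hZK
  have hd : ‖(X - Y)⁺‖ = 0 := by
    by_contra hne
    have hpos : 0 < ‖(X - Y)⁺‖ := (norm_nonneg _).lt_of_ne' hne
    obtain ⟨n, hn⟩ := exists_nat_gt (K / ‖(X - Y)⁺‖)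
    have := hK (n + 1) n.succ_pos
    rw [div_lt_iff₀ hpos] at hn
    push_cast at this
    nlinarith
  exact sub_nonpos.1 (posPart_eq_zero.1 (norm_eq_zero.1 hd))

end NormedLattice

section ComplexModulus

open Real

variable {α : Type*} [Lattice α] [AddCommGroup α] [Module ℝ α] {z : α × α} {m : α}

namespace IsCAbs

theorem le (h : IsCAbs z m) (θ : ℝ) : cos θ • z.1 + sin θ • z.2 ≤ m := h.1 ⟨θ, rfl⟩

theorem unique {m' : α} (h : IsCAbs z m) (h' : IsCAbs z m') : m = m' := IsLUB.unique h h'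

theorem neg (h : IsCAbs z m) : IsCAbs (-z) m := by
  have hset : {v | ∃ θ : ℝ, v = cos θ • (-z).1 + sin θ • (-z).2} =
      {v | ∃ θ : ℝ, v = cos θ • z.1 + sin θ • z.2} := by
    ext v
    constructor <;> rintro ⟨θ, rfl⟩ <;> exact ⟨θ + π, by simp [cos_add_pi, sin_add_pi]⟩
  unfold IsCAbs
  rwa [hset]

theorem abs_fst_le (h : IsCAbs z m) : |z.1| ≤ m :=
  abs_le'.2 ⟨by simpa using h.le 0, by simpa using h.le π⟩

theorem abs_snd_le (h : IsCAbs z m) : |z.2| ≤ m :=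
  abs_le'.2 ⟨by simpa using h.le (π / 2), by simpa using h.le (-(π / 2))⟩

theorem smul [IsOrderedModule ℝ α] {c : ℝ} (h : IsCAbs z m) (hc : 0 < c) :
    IsCAbs (c • z) (c • m) := by
  have := (OrderIso.smulRight (β := α) hc).isLUB_image'.2 h
  unfold IsCAbs
  convert this using 1
  · ext v
    simp [smul_add, smul_smul, mul_comm, eq_comm]
  · rfl

end IsCAbs

variable [IsOrderedAddMonoid α]

theorem IsCAbs.nonneg (h : IsCAbs z m) : 0 ≤ m := (abs_nonneg _).trans h.abs_fst_le

theorem IsCAbs.add_le {x y : α × α} {mx my : α} (h : IsCAbs (x + y) m) (hx : IsCAbs x mx)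
    (hy : IsCAbs y my) : m ≤ mx + my :=
  h.2 <| by
    rintro _ ⟨θ, rfl⟩
    simpa [smul_add, add_add_add_comm] using add_le_add (hx.le θ) (hy.le θ)

theorem smul_le_abs [IsOrderedModule ℝ α] {c : ℝ} (hc : |c| ≤ 1) (a : α) : c • a ≤ |a| := by
  rcases le_total 0 c with hc0 | hc0
  · calc c • a ≤ c • |a| := smul_le_smul_of_nonneg_left (le_abs_self a) hc0
      _ ≤ |a| := smul_le_of_le_one_left (abs_nonneg a) (abs_le.1 hc).2
  · calc c • a = (-c) • -a := (neg_smul_neg c a).symm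
      _ ≤ (-c) • |a| := smul_le_smul_of_nonneg_left (neg_le_abs a) (neg_nonneg.2 hc0)
      _ ≤ |a| := smul_le_of_le_one_left (abs_nonneg a) (by linarith [(abs_le.1 hc).1])

theorem isCAbs_fst [IsOrderedModule ℝ α] (a : α) : IsCAbs (a, 0) |a| := by
  refine ⟨?_, fun w hw => abs_le'.2 ⟨hw ⟨0, by simp⟩, hw ⟨π, by simp⟩⟩⟩
  rintro _ ⟨θ, rfl⟩
  simpa using smul_le_abs (abs_cos_le_one θ) a

theorem isCAbs_snd [IsOrderedModule ℝ α] (a : α) : IsCAbs (0, a) |a| := by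
  refine ⟨?_, fun w hw => abs_le'.2 ⟨hw ⟨π / 2, by simp⟩, hw ⟨-(π / 2), by simp⟩⟩⟩
  rintro _ ⟨θ, rfl⟩
  simpa using smul_le_abs (abs_sin_le_one θ) a

end ComplexModulus

section ComplexModulusFunction

variable {α : Type*} [Lattice α] [AddCommGroup α] [Module ℝ α]
  {am : α × α → α} (ham : ∀ z, IsCAbs z (am z))

include ham

theorem cabs_neg (z : α × α) : am (-z) = am z := (ham _).unique (ham z).neg

variable [IsOrderedAddMonoid α]

theorem cabs_zero : am 0 = 0 :=
  le_antisymm ((ham 0).2 (by rintro _ ⟨θ, rfl⟩; simp)) (ham 0).nonneg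

theorem cabs_add_le (x y : α × α) : am (x + y) ≤ am x + am y := (ham _).add_le (ham x) (ham y)

theorem cabs_sub_le (x y : α × α) : am (x - y) ≤ am x + am y := by
  simpa [sub_eq_add_neg, cabs_neg ham] using cabs_add_le ham x (-y)

theorem cabs_sum_le {ι : Type*} (s : Finset ι) (x : ι → α × α) :
    am (∑ i ∈ s, x i) ≤ ∑ i ∈ s, am (x i) :=
  Finset.le_sum_of_subadditive am (cabs_zero ham).le (cabs_add_le ham) s x

theorem cabs_add_of_inf_eq_zero {x y : α × α} (h : am x ⊓ am y = 0) :
    am (x + y) = am x + am y := by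
  have hle : ∀ {x y : α × α}, am x ⊓ am y = 0 → am x ≤ am (x + y) := fun {x y} h => by
    have := le_sup_of_le_add_of_le_add (v := 0) (by simpa using cabs_sub_le ham (x + y) y)
      (zero_add (am x)).ge (inf_comm (am x) (am y) ▸ h)
    rwa [sup_eq_left.2 (ham _).nonneg] at this
  refine le_antisymm (cabs_add_le ham x y) ?_
  rw [add_eq_sup_of_inf_eq_zero h]
  exact sup_le (hle h) (add_comm x y ▸ hle (inf_comm (am x) (am y) ▸ h))

theorem cabs_sum_of_pairwise_inf_eq_zero {ι : Type*} (s : Finset ι) (x : ι → α × α)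
    (h : ∀ i ∈ s, ∀ j ∈ s, i ≠ j → am (x i) ⊓ am (x j) = 0) :
    am (∑ i ∈ s, x i) = ∑ i ∈ s, am (x i) := by
  induction s using Finset.cons_induction with
  | empty => simp [cabs_zero ham]
  | cons a s ha ih =>
    have hs := ih fun i hi j hj => h i (Finset.mem_cons_of_mem hi) j (Finset.mem_cons_of_mem hj)
    have hdisj : am (x a) ⊓ am (∑ i ∈ s, x i) = 0 := hs ▸ inf_sum_eq_zero (ham _).nonneg
      (fun _ _ => (ham _).nonneg) fun i hi =>
        h a (Finset.mem_cons_self a s) i (Finset.mem_cons_of_mem hi) fun hai => ha (hai ▸ hi)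
    rw [Finset.sum_cons, Finset.sum_cons, cabs_add_of_inf_eq_zero ham hdisj, hs]

theorem cabs_nsmul [IsOrderedModule ℝ α] (n : ℕ) (z : α × α) : am (n • z) = n • am z := by
  rcases n.eq_zero_or_pos with rfl | hn
  · simp [cabs_zero ham]
  · exact (ham _).unique
      (by simpa only [Nat.cast_smul_eq_nsmul] using (ham z).smul (Nat.cast_pos.2 hn))

theorem cabs_sum_range_le (b : α × α) {Z : α} (hZ : 0 ≤ Z) (n : ℕ) (a : ℕ → α × α)
    (hdisj : ∀ j k, j < k → k < n → am (b - a j) ⊓ am (a k) = 0)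
    (hbdd : ∀ k < n, am (a k) ≤ Z) :
    am (∑ k ∈ Finset.range n, a k) ≤ n • am b + Z := by
  induction n generalizing a with
  | zero => simpa [cabs_zero ham] using hZ
  | succ n ih =>
    rw [Finset.sum_range_succ']
    set R := ∑ k ∈ Finset.range n, a (k + 1)
    have hR : am R ≤ n • am b + Z := ih (fun k => a (k + 1))
      (fun j k hjk hk => hdisj _ _ (by omega) (by omega)) fun k hk => hbdd _ (by omega)
    have hdisjR : am R ⊓ am (b - a 0) = 0 := by
      refine inf_comm (am R) _ ▸ inf_eq_zero_of_le_of_le ?_ (ham _).nonneg (ham _).nonneg le_rfl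
        (cabs_sum_le ham _ _)
      exact inf_sum_eq_zero (ham _).nonneg (fun _ _ => (ham _).nonneg) fun k hk =>
        hdisj 0 (k + 1) k.succ_pos (by simpa using hk)
    have h₁ : am (R + a 0) ≤ am (a 0) + am R := add_comm R (a 0) ▸ cabs_add_le ham _ _
    have h₂ : am (R + a 0) ≤ (am b + am R) + am (b - a 0) := by
      rw [show R + a 0 = (b + R) - (b - a 0) by abel]
      exact (cabs_sub_le ham _ _).trans (add_le_add_left (cabs_add_le ham b R) _)
    -- `R + a 0` is estimated through `a 0` and through `b + R`, with disjoint error terms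
    refine (le_sup_of_le_add_of_le_add h₁ h₂ hdisjR).trans (sup_le ?_ ?_)
    · exact (hbdd 0 n.succ_pos).trans (le_add_of_nonneg_left (nsmul_nonneg (ham b).nonneg _))
    · rw [succ_nsmul', add_assoc]
      exact add_le_add_right hR _

theorem sum_range_cabs_eq_cabs_add_cabs (x : ℕ → α × α) (n : ℕ)
    (hx : ∀ i j, i + 2 ≤ j → am (x i) ⊓ am (x j) = 0) :
    ∑ j ∈ Finset.range n, am (x j) =
      am (∑ j ∈ Finset.range n with j % 2 = 0, x j) +
        am (∑ j ∈ Finset.range n with ¬j % 2 = 0, x j) := by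
  have hpar : ∀ s : Finset ℕ, (∀ i ∈ s, ∀ j ∈ s, i ≠ j → i + 2 ≤ j ∨ j + 2 ≤ i) →
      ∀ i ∈ s, ∀ j ∈ s, i ≠ j → am (x i) ⊓ am (x j) = 0 := by
    intro s hs i hi j hj hij
    rcases hs i hi j hj hij with h | h
    · exact hx i j h
    · rw [inf_comm]; exact hx j i h
  rw [cabs_sum_of_pairwise_inf_eq_zero ham _ _ (hpar _ fun i hi j hj _ => by
      simp only [Finset.mem_filter] at hi hj; omega),
    cabs_sum_of_pairwise_inf_eq_zero ham _ _ (hpar _ fun i hi j hj _ => by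
      simp only [Finset.mem_filter] at hi hj; omega),
    Finset.sum_filter_add_sum_filter_not]

end ComplexModulusFunction

section DisjointnessPreserving

variable {E F : Type*} [NormedAddCommGroup E] [Lattice E] [HasSolidNorm E] [IsOrderedAddMonoid E]
  [NormedAddCommGroup F] [Lattice F] [HasSolidNorm F] [IsOrderedAddMonoid F] [NormedSpace ℝ F]
  {am : F × F → F} (ham : ∀ z, IsCAbs z (am z)) (S : E →+ F × F) {C : ℝ}
  (hdisj : ∀ a b : E, 0 ≤ a → 0 ≤ b → a ⊓ b = 0 → am (S a) ⊓ am (S b) = 0)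
  (hbdd : ∀ a, ‖am (S a)‖ ≤ C * ‖a‖)

include ham hdisj hbdd

theorem exists_nsmul_cabs_map_le {p e : E} (hp : 0 ≤ p) (hpe : p ≤ e) (n : ℕ) :
    ∃ Z, 0 ≤ Z ∧ n • am (S p) ≤ n • am (S e) + Z ∧ ‖Z‖ ≤ 2 * |C| * ‖e‖ := by
  have he : 0 ≤ e := hp.trans hpe
  have hpn : n • p ≤ n • e := nsmul_le_nsmul_right hpe n
  set q := layer (n • p) e
  set r : ℕ → E := fun k => q k - q (k + 1)
  have hr : ∀ k, 0 ≤ r k := fun k => sub_nonneg.2 (layer_succ_le he k)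
  have hq : ∀ k ≤ n, ∑ j ∈ Finset.Ico k n, r j = q k := fun k hk =>
    sum_Ico_layer_sub_layer he hk hpn
  have hsum_le : ∀ s ⊆ Finset.range n, ∑ j ∈ s, r j ≤ e := fun s hs => calc
    _ ≤ ∑ j ∈ Finset.range n, r j := Finset.sum_le_sum_of_subset_of_nonneg hs fun j _ _ => hr j
    _ = q 0 := by simpa using hq 0 n.zero_le
    _ ≤ e := layer_le 0
  have hsmall : ∀ s ⊆ Finset.range n, ‖am (S (∑ j ∈ s, r j))‖ ≤ |C| * ‖e‖ := fun s hs =>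
    le_abs_mul_norm_of_nonneg_of_le hbdd (Finset.sum_nonneg fun j _ => hr j) (hsum_le s hs)
  set Z := ∑ j ∈ Finset.range n, am (S (r j)) with hZ
  have hZ0 : 0 ≤ Z := Finset.sum_nonneg fun _ _ => (ham _).nonneg
  refine ⟨Z, hZ0, ?_, ?_⟩
  · have hqZ : ∀ k < n, am (S (q k)) ≤ Z := fun k hk => calc
      am (S (q k)) = am (∑ j ∈ Finset.Ico k n, S (r j)) := by rw [← hq k hk.le, map_sum]
      _ ≤ ∑ j ∈ Finset.Ico k n, am (S (r j)) := cabs_sum_le ham _ _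
      _ ≤ Z := Finset.sum_le_sum_of_subset_of_nonneg
          (fun j hj => Finset.mem_range.2 (Finset.mem_Ico.1 hj).2) fun _ _ _ => (ham _).nonneg
    have := cabs_sum_range_le ham (S e) hZ0 n (fun k => S (q k))
      (fun j k hjk _ => by
        rw [← map_sub]
        exact hdisj _ _ (sub_nonneg.2 (layer_le j)) (layer_nonneg he k)
          (sub_layer_inf_layer he hjk))
      hqZ
    rwa [← map_sum, sum_range_layer he (nsmul_nonneg hp n) hpn, map_nsmul, cabs_nsmul ham] at this
  · rw [hZ, sum_range_cabs_eq_cabs_add_cabs ham _ n fun i j hij =>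
      hdisj _ _ (hr i) (hr j) (layer_sub_layer_succ_inf_eq_zero he hij), ← map_sum, ← map_sum,
      mul_assoc, two_mul]
    exact (norm_add_le _ _).trans
      (add_le_add (hsmall _ (Finset.filter_subset _ _)) (hsmall _ (Finset.filter_subset _ _)))

theorem cabs_map_le_of_nonneg_of_le {p e : E} (hp : 0 ≤ p) (hpe : p ≤ e) :
    am (S p) ≤ am (S e) :=
  le_of_forall_nsmul_le_nsmul_add (exists_nsmul_cabs_map_le ham S hdisj hbdd hp hpe)

theorem cabs_map_le_of_abs_le {a e : E} (h : |a| ≤ e) : am (S a) ≤ am (S e) := calc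
  am (S a) = am (S a⁺ - S a⁻) := by rw [← map_sub, posPart_sub_negPart]
  _ ≤ am (S a⁺) + am (S a⁻) := cabs_sub_le ham _ _
  _ = am (S |a|) := by
    rw [← posPart_add_negPart, map_add, cabs_add_of_inf_eq_zero ham
      (hdisj _ _ (posPart_nonneg a) (negPart_nonneg a) (posPart_inf_negPart_eq_zero a))]
  _ ≤ am (S e) := cabs_map_le_of_nonneg_of_le ham S hdisj hbdd (abs_nonneg a) h

end DisjointnessPreserving

theorem stmt4_general {E F : Type*}
    [NormedAddCommGroup E] [Lattice E] [HasSolidNorm E] [IsOrderedAddMonoid E] [NormedSpace ℝ E]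
    [NormedAddCommGroup F] [Lattice F] [HasSolidNorm F] [IsOrderedAddMonoid F] [NormedSpace ℝ F]
    (amE : E × E → E) (hamE : ∀ z, IsCAbs z (amE z))
    (amF : F × F → F) (hamF : ∀ z, IsCAbs z (amF z))
    (T : E × E → F × F)
    (hadd : ∀ z w, T (z + w) = T z + T w)
    (hbdd : ∃ C : ℝ, ∀ z, ‖amF (T z)‖ ≤ C * ‖amE z‖)
    (hdisj : ∀ x y : E × E, amE x ⊓ amE y = 0 → amF (T x) ⊓ amF (T y) = 0)
    (z : E × E) :
    ∃ w : F, 0 ≤ w ∧ ∀ u : E × E, amE u ≤ amE z → amF (T u) ≤ w := by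
  obtain ⟨C, hC⟩ := hbdd
  have key : ∀ ι : E →+ E × E, (∀ a, amE (ι a) = |a|) →
      ∀ a, |a| ≤ amE z → amF (T (ι a)) ≤ amF (T (ι (amE z))) := fun ι hι a ha =>
    cabs_map_le_of_abs_le hamF ((AddMonoidHom.mk' T hadd).comp ι)
      (fun a b ha hb hab => hdisj _ _ (by rwa [hι, hι, abs_of_nonneg ha, abs_of_nonneg hb]))
      (fun a => by simpa [hι, norm_abs_eq_norm] using hC (ι a)) ha
  refine ⟨amF (T (amE z, 0)) + amF (T (0, amE z)), add_nonneg (hamF _).nonneg (hamF _).nonneg,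
    fun u hu => ?_⟩
  calc amF (T u) = amF (T (u.1, 0) + T (0, u.2)) := by rw [← hadd, Prod.fst_add_snd]
    _ ≤ amF (T (u.1, 0)) + amF (T (0, u.2)) := cabs_add_le hamF _ _
    _ ≤ _ := add_le_add
        (key (.inl E E) (fun a => (hamE _).unique (isCAbs_fst a)) _ ((hamE u).abs_fst_le.trans hu))
        (key (.inr E E) (fun a => (hamE _).unique (isCAbs_snd a)) _ ((hamE u).abs_snd_le.trans hu))

/-- Every disjointness preserving bounded linear operator between complex Banach lattices
is order bounded. -/
theorem stmt4 {E F : Type*}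
    [NormedAddCommGroup E] [Lattice E] [HasSolidNorm E] [IsOrderedAddMonoid E] [NormedSpace ℝ E] [CompleteSpace E]
    [NormedAddCommGroup F] [Lattice F] [HasSolidNorm F] [IsOrderedAddMonoid F] [NormedSpace ℝ F] [CompleteSpace F]
    (amE : E × E → E) (hamE : ∀ z, IsCAbs z (amE z))
    (amF : F × F → F) (hamF : ∀ z, IsCAbs z (amF z))
    (T : E × E → F × F)
    (hadd : ∀ z w, T (z + w) = T z + T w)
    (hsmul : ∀ (c : ℂ) (z : E × E), T (cSmul c z) = cSmul c (T z))
    (hbdd : ∃ C : ℝ, ∀ z, ‖amF (T z)‖ ≤ C * ‖amE z‖)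
    (hdisj : ∀ x y : E × E, amE x ⊓ amE y = 0 → amF (T x) ⊓ amF (T y) = 0)
    (z : E × E) :
    ∃ w : F, 0 ≤ w ∧ ∀ u : E × E, amE u ≤ amE z → amF (T u) ≤ w :=
  stmt4_general amE hamE amF hamF T hadd hbdd hdisj z
end
end

section
/- Let K be an extremally disconnected compact Hausdorff space, Y a Banach space, w : K → L(Y) continuous, and suppose that σ(w(k)) = σ_{a.p.}(w(k)) for every k ∈ K (e.g. if Y is finite-dimensional or each w(k) is a surjective isometry). Then the multiplication operator T on C(K, Y) given by (Tx)(k) = w(k)(x(k)) satisfies σ(T) = σ_{a.p.}(T). -/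
/-!
If `λ - T` is bounded below, then so is every fiber `λ - w k`, with the same constant: test `T`
on `k ↦ f k • y` for a Urysohn function `f` that is `1` at `k` and vanishes wherever `w · y` is
not close to `w k y`. By hypothesis each `λ - w k` is then invertible; since inversion is
continuous in the Banach algebra `L(Y)`, the pointwise inverses form a continuous function, and
its multiplication operator inverts `λ - T`.
-/

open ContinuousLinearMap

def IsBoundedBelow {E F : Type*} [Norm E] [Norm F] (f : E → F) : Prop :=
  ∃ c > 0, ∀ x, c * ‖x‖ ≤ ‖f x‖

theorem IsUnit.isBoundedBelow {𝕜 E : Type*} [NontriviallyNormedField 𝕜] [NormedAddCommGroup E]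
    [NormedSpace 𝕜 E] {A : E →L[𝕜] E} (hA : IsUnit A) : IsBoundedBelow A := by
  obtain ⟨⟨A, B, hBA, hAB⟩, rfl⟩ := hA
  refine ⟨(‖B‖ + 1)⁻¹, by positivity, fun x => ?_⟩
  rw [inv_mul_le_iff₀ (by positivity)]
  calc ‖x‖ = ‖B (A x)‖ := by rw [← mul_apply_eq_comp, hAB, one_apply_eq_self]
    _ ≤ ‖B‖ * ‖A x‖ := le_opNorm _ _
    _ ≤ (‖B‖ + 1) * ‖A x‖ := by gcongr; linarith

namespace ContinuousMap

section MulOperator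

variable {𝕜 K E F : Type*} [NontriviallyNormedField 𝕜] [TopologicalSpace K] [CompactSpace K]
  [NormedAddCommGroup E] [NormedSpace 𝕜 E] [NormedAddCommGroup F] [NormedSpace 𝕜 F]

noncomputable def mulOperator (u : C(K, E →L[𝕜] F)) : C(K, E) →L[𝕜] C(K, F) :=
  LinearMap.mkContinuous
    { toFun := fun x => ⟨fun k => u k (x k), u.continuous.clm_apply x.continuous⟩
      map_add' := fun x y => by ext; simp
      map_smul' := fun a x => by ext; simp }
    ‖u‖ fun x => (norm_le _ (by positivity)).mpr fun k =>
      (u k).le_of_opNorm_le_of_le (u.norm_coe_le_norm k) (x.norm_coe_le_norm k)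

@[simp]
theorem mulOperator_apply (u : C(K, E →L[𝕜] F)) (x : C(K, E)) (k : K) :
    mulOperator u x k = u k (x k) :=
  rfl

noncomputable def mulOperatorAlgHom : C(K, E →L[𝕜] E) →ₐ[𝕜] (C(K, E) →L[𝕜] C(K, E)) :=
  AlgHom.ofLinearMap
    { toFun := mulOperator
      map_add' := fun u v => by ext; simp
      map_smul' := fun a u => by ext; simp }
    (by ext; simp) (fun u v => by ext; simp)

@[simp]
theorem mulOperatorAlgHom_apply (u : C(K, E →L[𝕜] E)) : mulOperatorAlgHom u = mulOperator u :=
  rfl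

end MulOperator

variable {𝕜 K E F : Type*} [RCLike 𝕜] [TopologicalSpace K] [CompactSpace K] [T2Space K]
  [NormedAddCommGroup E] [NormedSpace 𝕜 E] [NormedAddCommGroup F] [NormedSpace 𝕜 F]

theorem mul_norm_le_norm_apply_of_mulOperator (u : C(K, E →L[𝕜] F)) {c : ℝ}
    (h : ∀ x, c * ‖x‖ ≤ ‖mulOperator u x‖) (k₀ : K) (y : E) : c * ‖y‖ ≤ ‖u k₀ y‖ := by
  refine le_of_forall_pos_le_add fun ε hε => ?_
  let U : Set K := {k | ‖u k y - u k₀ y‖ < ε}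
  have hU : IsOpen U := isOpen_lt (by fun_prop) continuous_const
  obtain ⟨f, hf0, hf1, hf01⟩ := exists_continuous_zero_one_of_isClosed hU.isClosed_compl
    (isClosed_singleton (x := k₀)) (Set.disjoint_singleton_right.mpr (by simpa [U] using hε))
  have hf : ∀ k, ‖(f k : 𝕜)‖ ≤ 1 := fun k => by
    simpa [abs_of_nonneg (hf01 k).1] using (hf01 k).2
  let x : C(K, E) := ⟨fun k => (f k : 𝕜) • y, by fun_prop⟩
  have hx : ‖x‖ = ‖y‖ := by
    refine le_antisymm ((norm_le _ (norm_nonneg y)).mpr fun k => ?_) ?_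
    · simpa [x, norm_smul] using mul_le_of_le_one_left (norm_nonneg y) (hf k)
    · have hfk₀ : f k₀ = 1 := hf1 rfl
      simpa [x, hfk₀] using x.norm_coe_le_norm k₀
  calc c * ‖y‖ = c * ‖x‖ := by rw [hx]
    _ ≤ ‖mulOperator u x‖ := h x
    _ ≤ ‖u k₀ y‖ + ε := (norm_le _ (by positivity)).mpr fun k => ?_
  by_cases hk : k ∈ U
  · calc ‖u k ((f k : 𝕜) • y)‖ = ‖(f k : 𝕜)‖ * ‖u k y‖ := by rw [map_smul, norm_smul]
      _ ≤ ‖u k y‖ := mul_le_of_le_one_left (norm_nonneg _) (hf k)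
      _ ≤ ‖u k₀ y‖ + ‖u k y - u k₀ y‖ := norm_le_norm_add_norm_sub' _ _
      _ ≤ ‖u k₀ y‖ + ε := by simp only [U, Set.mem_ofPred_eq] at hk; linarith
  · simp [x, hf0 hk]
    positivity

theorem isBoundedBelow_apply_of_mulOperator {u : C(K, E →L[𝕜] F)}
    (h : IsBoundedBelow (mulOperator u)) (k : K) : IsBoundedBelow (u k) :=
  let ⟨c, hc, hbound⟩ := h
  ⟨c, hc, mul_norm_le_norm_apply_of_mulOperator u hbound k⟩

theorem isUnit_mulOperator_iff [CompleteSpace E] (u : C(K, E →L[𝕜] E))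
    (hu : ∀ k, IsBoundedBelow (u k) → IsUnit (u k)) :
    IsUnit (mulOperator u) ↔ IsBoundedBelow (mulOperator u) := by
  refine ⟨IsUnit.isBoundedBelow, fun h => ?_⟩
  rw [← mulOperatorAlgHom_apply]
  have hunit : IsUnit u := (isUnit_iff_forall_isUnit u).mpr fun k =>
    hu k (isBoundedBelow_apply_of_mulOperator h k)
  exact hunit.map _

end ContinuousMap

open ContinuousMap in
theorem stmt13_general {K : Type*} [TopologicalSpace K] [CompactSpace K] [T2Space K]
    {Y : Type*} [NormedAddCommGroup Y] [NormedSpace ℂ Y] [CompleteSpace Y]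
    (w : C(K, Y →L[ℂ] Y)) (T : C(K, Y) →L[ℂ] C(K, Y))
    (hT : ∀ (x : C(K, Y)) (k : K), T x k = w k (x k))
    (hfib : ∀ k : K, spectrum ℂ (w k) =
        {l : ℂ | ¬ ∃ c : ℝ, 0 < c ∧ ∀ y : Y, c * ‖y‖ ≤ ‖l • y - w k y‖}) :
    spectrum ℂ T =
      {l : ℂ | ¬ ∃ c : ℝ, 0 < c ∧ ∀ x : C(K, Y), c * ‖x‖ ≤ ‖l • x - T x‖} := by
  obtain rfl : T = mulOperator w := by ext x k; exact hT x k
  ext l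
  have hshift : algebraMap ℂ (C(K, Y) →L[ℂ] C(K, Y)) l - mulOperator w =
      mulOperator (l • 1 - w) := by
    ext x k
    simp [Algebra.algebraMap_eq_smul_one]
  have hshift_apply : ∀ x, mulOperator (l • 1 - w) x = l • x - mulOperator w x := fun x => by
    ext k
    simp
  have hfiber : ∀ k, IsBoundedBelow ((l • 1 - w) k) → IsUnit ((l • 1 - w) k) := fun k hk => by
    have hk' : (l • 1 - w) k = algebraMap ℂ (Y →L[ℂ] Y) l - w k := by
      simp [Algebra.algebraMap_eq_smul_one]
    rw [hk', ← spectrum.notMem_iff, hfib k, Set.mem_ofPred_eq, not_not]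
    simpa [IsBoundedBelow] using hk
  rw [spectrum.mem_iff, hshift, isUnit_mulOperator_iff _ hfiber]
  simp only [IsBoundedBelow, hshift_apply, Set.mem_ofPred_eq]

/-- If for every k the spectrum of the fiber operator w(k) consists of approximate
eigenvalues, then the multiplication operator T on C(K, Y) satisfies σ(T) = σ_{a.p.}(T). -/
theorem stmt13 {K : Type*} [TopologicalSpace K] [CompactSpace K] [T2Space K]
    [ExtremallyDisconnected K]
    {Y : Type*} [NormedAddCommGroup Y] [NormedSpace ℂ Y] [CompleteSpace Y]
    (w : C(K, Y →L[ℂ] Y)) (T : C(K, Y) →L[ℂ] C(K, Y))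
    (hT : ∀ (x : C(K, Y)) (k : K), T x k = w k (x k))
    (hfib : ∀ k : K, spectrum ℂ (w k) =
        {l : ℂ | ¬ ∃ c : ℝ, 0 < c ∧ ∀ y : Y, c * ‖y‖ ≤ ‖l • y - w k y‖}) :
    spectrum ℂ T =
      {l : ℂ | ¬ ∃ c : ℝ, 0 < c ∧ ∀ x : C(K, Y), c * ‖x‖ ≤ ‖l • x - T x‖} :=
  stmt13_general w T hT hfib
end
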